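/- arXiv:1301.4359 — 2 statements merged into one kernel-verified Lean document; each statement's English description precedes it below -/
import Mathlib

section
/- The series 1 + (1/5^2)(1/2) + (1/9^2)((1·3)/(2·4)) + ··· , i.e. ∑_{n=0}^∞ ((1/2)_n / n!) · 1/(4n+1)^2, equals π^{5/2} / (8√2 Γ(3/4)^2). -/
open Real BigOperators

noncomputable def poch (a : ℝ) (n : ℕ) : ℝ := ∏ i ∈ Finset.range n, (a + i)

noncomputable def digamma (x : ℝ) : ℝ := deriv Real.Gamma x / Real.Gamma x

/-!
Expanding `(1 - x)^(-b) = ∑ (b)ₙ/n! xⁿ` and integrating against `x^(a-1)` over `(0, 1)` gives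
`∑ (b)ₙ/n! · 1/(a+n) = B(a, 1-b) = Γ(a) Γ(1-b) / Γ(a+1-b)`. Differentiating in `a` gives
`∑ (b)ₙ/n! · 1/(a+n)² = B(a, 1-b) (ψ(a+1-b) - ψ(a))`. For `a = 1/4`, `b = 1/2` the
reflection formula `Γ(s) Γ(1-s) = π / sin(πs)` supplies both `Γ(1/4) Γ(3/4) = π √2` and,
after taking logarithmic derivatives, `ψ(3/4) - ψ(1/4) = π cot(π/4) = π`.
-/

open Set MeasureTheory Filter Topology

lemma poch_succ (a : ℝ) (n : ℕ) : poch a (n + 1) = poch a n * (a + n) :=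
  Finset.prod_range_succ _ _

lemma poch_nonneg {a : ℝ} (ha : 0 ≤ a) (n : ℕ) : 0 ≤ poch a n :=
  Finset.prod_nonneg fun _ _ => by positivity

lemma ascPochhammer_eval_eq_poch (a : ℝ) (n : ℕ) : (ascPochhammer ℝ n).eval a = poch a n := by
  induction n with
  | zero => simp [poch]
  | succ n ih => rw [ascPochhammer_succ_eval, ih, poch_succ]

lemma Ring.choose_add_sub_one_eq_poch_div_factorial (a : ℝ) (n : ℕ) :
    Ring.choose (a + n - 1) n = poch a n / n.factorial := by
  rw [Ring.choose_eq_smul, Polynomial.descPochhammer_smeval_eq_ascPochhammer,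
    Polynomial.ascPochhammer_smeval_eq_eval, smul_eq_mul, ← ascPochhammer_eval_eq_poch]
  ring_nf

theorem hasSum_poch_div_factorial_mul_pow (b : ℝ) {x : ℝ} (hx : |x| < 1) :
    HasSum (fun n => poch b n / n.factorial * x ^ n) (1 / (1 - x) ^ b) := by
  have := (one_div_one_sub_rpow_hasFPowerSeriesOnBall_zero b).hasSum (y := x)
    (by simpa [enorm_eq_nnnorm, ← NNReal.coe_lt_coe] using hx)
  simpa [FormalMultilinearSeries.ofScalars_apply_eq,
    Ring.choose_add_sub_one_eq_poch_div_factorial, mul_comm] using this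

lemma ofReal_rpow_mul_one_sub_rpow {u v x : ℝ} (hx : x ∈ Ioo (0 : ℝ) 1) :
    ((x ^ (u - 1) * (1 - x) ^ (v - 1) : ℝ) : ℂ) =
      (x : ℂ) ^ ((u : ℂ) - 1) * (1 - (x : ℂ)) ^ ((v : ℂ) - 1) := by
  rw [Complex.ofReal_mul, Complex.ofReal_cpow hx.1.le, Complex.ofReal_cpow (sub_nonneg.2 hx.2.le)]
  push_cast
  rfl

lemma integrableOn_rpow_mul_one_sub_rpow {u v : ℝ} (hu : 0 < u) (hv : 0 < v) :
    IntegrableOn (fun x : ℝ => x ^ (u - 1) * (1 - x) ^ (v - 1)) (Ioo 0 1) := by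
  have h := Complex.betaIntegral_convergent (u := u) (v := v) (by simpa) (by simpa)
  rw [intervalIntegrable_iff_integrableOn_Ioo_of_le zero_le_one] at h
  refine IntegrableOn.congr_fun h.re (fun x hx => ?_) measurableSet_Ioo
  simp only [← ofReal_rpow_mul_one_sub_rpow hx, RCLike.re_to_complex, Complex.ofReal_re]

lemma integral_rpow_mul_one_sub_rpow {u v : ℝ} (hu : 0 < u) (hv : 0 < v) :
    ∫ x in Ioo (0 : ℝ) 1, x ^ (u - 1) * (1 - x) ^ (v - 1) =
      Gamma u * Gamma v / Gamma (u + v) := by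
  have h := Complex.Gamma_mul_Gamma_eq_betaIntegral (s := u) (t := v) (by simpa) (by simpa)
  rw [Complex.betaIntegral, intervalIntegral.integral_of_le zero_le_one,
    integral_Ioc_eq_integral_Ioo, ← setIntegral_congr_fun measurableSet_Ioo
      (fun x hx => ofReal_rpow_mul_one_sub_rpow hx), integral_complex_ofReal,
    ← Complex.ofReal_add, Complex.Gamma_ofReal, Complex.Gamma_ofReal, Complex.Gamma_ofReal,
    ← Complex.ofReal_mul, ← Complex.ofReal_mul, Complex.ofReal_inj] at h
  rw [h, mul_div_cancel_left₀ _ (Gamma_pos_of_pos (add_pos hu hv)).ne']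

lemma integral_Ioo_zero_one_rpow {r : ℝ} (hr : -1 < r) :
    ∫ x in Ioo (0 : ℝ) 1, x ^ r = 1 / (r + 1) := by
  rw [← integral_Ioc_eq_integral_Ioo, ← intervalIntegral.integral_of_le zero_le_one,
    integral_rpow (Or.inl hr), one_rpow, zero_rpow (by linarith), sub_zero]

theorem hasSum_poch_div_factorial_div_add {a b : ℝ} (ha : 0 < a) (hb0 : 0 ≤ b) (hb1 : b < 1) :
    HasSum (fun n => poch b n / n.factorial / (a + n))
      (Gamma a * Gamma (1 - b) / Gamma (a + (1 - b))) := by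
  set F : ℕ → ℝ → ℝ := fun n x => poch b n / n.factorial * x ^ (a + n - 1)
  have hF_nonneg : ∀ n, ∀ x ∈ Ioo (0 : ℝ) 1, 0 ≤ F n x := fun n x hx =>
    mul_nonneg (div_nonneg (poch_nonneg hb0 n) (Nat.cast_nonneg _)) (rpow_nonneg hx.1.le _)
  have hF_integral : ∀ n, ∫ x in Ioo (0 : ℝ) 1, F n x = poch b n / n.factorial / (a + n) := by
    intro n
    rw [integral_const_mul, integral_Ioo_zero_one_rpow (by linarith [n.cast_nonneg (α := ℝ)])]
    ring_nf
  have hF_hasSum : ∀ x ∈ Ioo (0 : ℝ) 1,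
      HasSum (fun n => F n x) (x ^ (a - 1) * (1 - x) ^ ((1 - b) - 1)) := by
    intro x hx
    have hterm : ∀ n : ℕ, F n x = poch b n / n.factorial * x ^ n * x ^ (a - 1) := fun n => by
      show _ * x ^ (a + n - 1) = _
      rw [show a + n - 1 = n + (a - 1) by ring, rpow_add hx.1, rpow_natCast, mul_assoc]
    rw [funext hterm, sub_sub_cancel_left, rpow_neg (sub_nonneg.2 hx.2.le), mul_comm, ← one_div]
    exact (hasSum_poch_div_factorial_mul_pow b (by rw [abs_of_pos hx.1]; exact hx.2)).mul_right _
  have hmem : ∀ᵐ x ∂(volume.restrict (Ioo (0 : ℝ) 1)), x ∈ Ioo (0 : ℝ) 1 :=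
    ae_restrict_mem measurableSet_Ioo
  -- The terms are nonnegative, so they serve as their own dominating functions.
  have key := hasSum_integral_of_dominated_convergence (μ := volume.restrict (Ioo (0 : ℝ) 1))
    (f := fun x => x ^ (a - 1) * (1 - x) ^ ((1 - b) - 1)) F
    (fun n => by fun_prop)
    (fun n => hmem.mono fun x hx => (norm_of_nonneg (hF_nonneg n x hx)).le)
    (hmem.mono fun x hx => (hF_hasSum x hx).summable)
    ((integrableOn_rpow_mul_one_sub_rpow ha (by linarith)).congr_fun
      (fun x hx => (hF_hasSum x hx).tsum_eq.symm) measurableSet_Ioo)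
    (hmem.mono hF_hasSum)
  simpa only [hF_integral, integral_rpow_mul_one_sub_rpow ha (by linarith : 0 < 1 - b)] using key

theorem hasDerivAt_tsum_div_add {c : ℕ → ℝ} (hc : ∀ n, 0 ≤ c n)
    (hsum : ∀ s, 0 < s → Summable (fun n => c n / (s + n))) {a : ℝ} (ha : 0 < a) :
    HasDerivAt (fun s => ∑' n, c n / (s + n)) (-∑' n, c n / (a + n) ^ 2) a := by
  have hpos : ∀ n : ℕ, ∀ y ∈ Ioi (a / 2), 0 < y + n := fun n y hy => by
    linarith [hy.out, n.cast_nonneg (α := ℝ)]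
  rw [← tsum_neg]
  refine hasDerivAt_tsum_of_isPreconnected (t := Ioi (a / 2)) (y₀ := a)
    (g := fun n s => c n / (s + n)) (g' := fun n s => -(c n / (s + n) ^ 2))
    (u := fun n => 2 / a * (c n / (a / 2 + n))) ((hsum _ (by positivity)).mul_left _)
    isOpen_Ioi isPreconnected_Ioi (fun n y hy => ?_) (fun n y hy => ?_)
    (half_lt_self ha) (hsum a ha) (half_lt_self ha)
  · exact ((hasDerivAt_const y (c n)).fun_div ((hasDerivAt_id' y).add_const (n : ℝ))
      (hpos n y hy).ne').congr_deriv (by ring)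
  · have hy' : a / 2 < y := hy
    rw [norm_neg, norm_of_nonneg (div_nonneg (hc n) (by positivity))]
    calc c n / (y + n) ^ 2 ≤ c n / (a / 2 * (a / 2 + n)) :=
          div_le_div_of_nonneg_left (hc n) (by positivity) (by nlinarith [hpos n y hy])
      _ = 2 / a * (c n / (a / 2 + n)) := by field_simp

lemma hasDerivAt_Gamma_mul_digamma {s : ℝ} (hs : ∀ m : ℕ, s ≠ -m) :
    HasDerivAt Gamma (Gamma s * digamma s) s := by
  rw [digamma, mul_div_cancel₀ _ (Gamma_ne_zero hs)]
  exact (differentiableAt_Gamma hs).hasDerivAt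

lemma hasDerivAt_Gamma_div_Gamma_add {s d : ℝ} (hs : ∀ m : ℕ, s ≠ -m)
    (hsd : ∀ m : ℕ, s + d ≠ -m) :
    HasDerivAt (fun t => Gamma t / Gamma (t + d))
      (Gamma s / Gamma (s + d) * (digamma s - digamma (s + d))) s := by
  have hshift : HasDerivAt (fun t => Gamma (t + d)) (Gamma (s + d) * digamma (s + d)) s :=
    (hasDerivAt_Gamma_mul_digamma hsd).comp_add_const s d
  refine ((hasDerivAt_Gamma_mul_digamma hs).fun_div hshift (Gamma_ne_zero hsd)).congr_deriv ?_
  field_simp [Gamma_ne_zero hsd]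

theorem digamma_one_sub_sub_digamma {s : ℝ} (hs : ∀ n : ℤ, s ≠ n) :
    digamma (1 - s) - digamma s = π * cot (π * s) := by
  have hsin : sin (π * s) ≠ 0 := by
    rw [Ne, sin_eq_zero_iff]
    rintro ⟨n, hn⟩
    exact hs n (mul_left_cancel₀ pi_ne_zero (by linarith))
  have hs' : ∀ m : ℕ, s ≠ -m := fun m => by exact_mod_cast hs (-m)
  have hs'' : ∀ m : ℕ, 1 - s ≠ -m := fun m h => hs (m + 1) (by push_cast; linarith)
  have hprod : HasDerivAt (fun t => Gamma t * Gamma (1 - t))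
      (Gamma s * digamma s * Gamma (1 - s) + Gamma s * (Gamma (1 - s) * digamma (1 - s) * -1)) s :=
    (hasDerivAt_Gamma_mul_digamma hs').mul
      ((hasDerivAt_Gamma_mul_digamma hs'').comp s ((hasDerivAt_id s).const_sub 1))
  have hquot : HasDerivAt (fun t => π / sin (π * t))
      ((0 * sin (π * s) - π * (cos (π * s) * (π * 1))) / sin (π * s) ^ 2) s :=
    (hasDerivAt_const s π).fun_div ((hasDerivAt_id s).const_mul π).sin hsin
  rw [funext Gamma_mul_Gamma_one_sub] at hprod
  have h : Gamma s * Gamma (1 - s) * (digamma s - digamma (1 - s)) =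
      -(π ^ 2 * cos (π * s)) / sin (π * s) ^ 2 := by
    linear_combination hprod.unique hquot
  rw [Gamma_mul_Gamma_one_sub, cot_eq_cos_div_sin] at *
  field_simp at h ⊢
  linear_combination -h

theorem hasSum_poch_div_factorial_div_add_sq {a b : ℝ} (ha : 0 < a) (hb0 : 0 ≤ b)
    (hb1 : b < 1) :
    HasSum (fun n => poch b n / n.factorial / (a + n) ^ 2)
      (Gamma a * Gamma (1 - b) / Gamma (a + (1 - b)) * (digamma (a + (1 - b)) - digamma a)) := by
  set c : ℕ → ℝ := fun n => poch b n / n.factorial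
  have hc : ∀ n, 0 ≤ c n := fun n => div_nonneg (poch_nonneg hb0 n) (Nat.cast_nonneg _)
  have hsum : ∀ s, 0 < s → HasSum (fun n => c n / (s + n))
      (Gamma (1 - b) * (Gamma s / Gamma (s + (1 - b)))) := fun s hs => by
    convert hasSum_poch_div_factorial_div_add hs hb0 hb1 using 1
    ring
  have hne : ∀ s : ℝ, 0 < s → ∀ m : ℕ, s ≠ -m := fun s hs m =>
    ((neg_nonpos.2 m.cast_nonneg).trans_lt hs).ne'
  have hderiv := (hasDerivAt_Gamma_div_Gamma_add (d := 1 - b) (hne a ha)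
    (hne _ (by linarith))).const_mul (Gamma (1 - b))
  have heq : (fun s => ∑' n, c n / (s + n)) =ᶠ[𝓝 a]
      (fun s => Gamma (1 - b) * (Gamma s / Gamma (s + (1 - b)))) :=
    eventually_of_mem (Ioi_mem_nhds ha) fun s hs => (hsum s hs).tsum_eq
  have hvalue := (hasDerivAt_tsum_div_add hc (fun s hs => (hsum s hs).summable) ha).unique
    (hderiv.congr_of_eventuallyEq heq)
  have hsummable : Summable (fun n => c n / (a + n) ^ 2) := by
    refine ((hsum a ha).summable.mul_left a⁻¹).of_nonneg_of_le
      (fun n => div_nonneg (hc n) (by positivity)) fun n => ?_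
    have hn : (0 : ℝ) ≤ n := n.cast_nonneg
    calc c n / (a + n) ^ 2 ≤ c n / (a * (a + n)) :=
          div_le_div_of_nonneg_left (hc n) (by positivity) (by nlinarith)
      _ = a⁻¹ * (c n / (a + n)) := by field_simp
  convert hsummable.hasSum using 1
  linear_combination hvalue

lemma one_fourth_ne_intCast (n : ℤ) : (1 / 4 : ℝ) ≠ n := fun h => by
  have : ((4 * n : ℤ) : ℝ) = 1 := by push_cast; linarith
  norm_cast at this
  omega

lemma Gamma_one_fourth_mul_Gamma_three_fourths : Gamma (1 / 4) * Gamma (3 / 4) = √2 * π := by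
  rw [show (3 / 4 : ℝ) = 1 - 1 / 4 by norm_num, Gamma_mul_Gamma_one_sub,
    show π * (1 / 4) = π / 4 by ring, sin_pi_div_four]
  field_simp
  rw [sq_sqrt zero_le_two]

lemma digamma_three_fourths_sub_digamma_one_fourth : digamma (3 / 4) - digamma (1 / 4) = π := by
  rw [show (3 / 4 : ℝ) = 1 - 1 / 4 by norm_num, digamma_one_sub_sub_digamma one_fourth_ne_intCast,
    show π * (1 / 4) = π / 4 by ring, cot_eq_cos_div_sin, cos_pi_div_four, sin_pi_div_four,
    div_self (by positivity), mul_one]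

theorem stmt1 :
    ∑' n : ℕ, (poch (1/2) n / n.factorial) * (1 / (4 * (n : ℝ) + 1) ^ 2) =
      π ^ ((5 : ℝ)/2) / (8 * Real.sqrt 2 * Real.Gamma (3/4) ^ 2) := by
  have hsum := hasSum_poch_div_factorial_div_add_sq (a := 1 / 4) (b := 1 / 2)
    (by norm_num) (by norm_num) (by norm_num)
  rw [show (1 / 4 : ℝ) + (1 - 1 / 2) = 3 / 4 by norm_num,
    show (1 : ℝ) - 1 / 2 = 1 / 2 by norm_num,
    digamma_three_fourths_sub_digamma_one_fourth, Gamma_one_half_eq,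
    eq_div_of_mul_eq (Gamma_pos_of_pos (by norm_num)).ne'
      Gamma_one_fourth_mul_Gamma_three_fourths] at hsum
  have hterm : ∀ n : ℕ, poch (1/2) n / n.factorial * (1 / (4 * (n : ℝ) + 1) ^ 2) =
      poch (1 / 2) n / n.factorial / (1 / 4 + n) ^ 2 / 16 := fun n => by
    field_simp
    ring
  have hpow : π ^ ((5 : ℝ) / 2) = π ^ 2 * √π := by
    rw [show (5 : ℝ) / 2 = (2 : ℕ) + 1 / 2 by norm_num, rpow_add pi_pos, rpow_natCast,
      sqrt_eq_rpow]
  rw [tsum_congr hterm, tsum_div_const, hsum.tsum_eq, hpow]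
  have hΓ : Gamma (3 / 4) ≠ 0 := (Gamma_pos_of_pos (by norm_num)).ne'
  field_simp
  rw [sq_sqrt zero_le_two]
  ring
end

section
/- For every integer p ≥ 3 and all real f₁, f₂, the series ∑_{n=0}^∞ ((1/2)_n / n!)^2 · (n + f₁)(n + f₂)/((n+1)(n+2)···(n+p)) equals (Γ(p)/Γ(p + 1/2)^2) · (f₁ f₂ + (f₁ + f₂ + 1)/(4(p−1)) + 9/(16(p−1)(p−2))). -/
open Real BigOperators

/-!
Write the summand as `f₁ f₂ c_p(n) + (f₁ + f₂) n c_p(n) + n² c_p(n)` with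
`c_q(n) = ((1/2)_n / n!)² / (n+1)_q`, and let `M_k(q) = ∑ n^k c_q(n)`. The contiguity relations
`c_q(n) = (n+1+q) c_{q+1}(n)` and `(n+1) c_q(n+1) = (n+1/2)² c_{q+1}(n)` make
`n^k c_q(n) - (n+1)^k c_q(n+1)` a polynomial multiple of `c_{q+1}(n)`; summing these telescoping
series expresses `M_1(q+1)` and `M_2(q+1)` through `M_0(q+1)`, and gives the recursion
`M_0(q+1) = 4q / (2q+1)² · M_0(q)`, which is the one satisfied by `Γ(q) / Γ(q+1/2)²`.
The initial value `M_0(1) = 4/π` is the limit of `n c_0(n)`, i.e. Wallis' product.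
-/

open Filter Finset Topology

theorem HasSum.eq_sub_of_tendsto {G : Type*} [AddCommGroup G] [TopologicalSpace G]
    [IsTopologicalAddGroup G] [T2Space G] {e : ℕ → G} {s L : G}
    (hs : HasSum (fun n => e n - e (n + 1)) s) (he : Tendsto e atTop (𝓝 L)) : s = e 0 - L := by
  refine tendsto_nhds_unique hs.tendsto_sum_nat ?_
  simp_rw [sum_range_sub']
  exact tendsto_const_nhds.sub he

namespace PochhammerSeries

lemma poch_zero (a : ℝ) : poch a 0 = 1 := rfl

lemma poch_succ (a : ℝ) (n : ℕ) : poch a (n + 1) = poch a n * (a + n) :=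
  prod_range_succ _ _

lemma poch_succ' (a : ℝ) (n : ℕ) : poch a (n + 1) = a * poch (a + 1) n := by
  rw [poch, prod_range_succ', poch]
  push_cast
  rw [add_zero, mul_comm]
  exact congrArg _ (prod_congr rfl fun i _ => by ring)

lemma poch_pos {a : ℝ} (ha : 0 < a) (n : ℕ) : 0 < poch a n :=
  prod_pos fun i _ => by positivity

lemma pow_le_poch {x : ℝ} (hx : 1 ≤ x) (n : ℕ) : x ^ n ≤ poch x n := by
  induction n with
  | zero => simp [poch_zero]
  | succ n ih =>
    rw [poch_succ, pow_succ]
    exact mul_le_mul ih (by linarith [Nat.cast_nonneg (α := ℝ) n]) (by positivity)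
      (poch_pos (by linarith) n).le

noncomputable def weight (n : ℕ) : ℝ := (poch (1 / 2) n / n.factorial) ^ 2

lemma weight_nonneg (n : ℕ) : 0 ≤ weight n := sq_nonneg _

lemma weight_zero : weight 0 = 1 := by simp [weight, poch_zero]

lemma weight_succ (n : ℕ) :
    weight (n + 1) * ((n : ℝ) + 1) ^ 2 = weight n * ((n : ℝ) + 1 / 2) ^ 2 := by
  have h : (n.factorial : ℝ) ≠ 0 := Nat.cast_ne_zero.2 n.factorial_ne_zero
  rw [weight, weight, poch_succ, Nat.factorial_succ]
  push_cast
  field_simp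
  ring

lemma weight_mul_two_mul_add_one_le (n : ℕ) : weight n * (2 * n + 1) ≤ 1 := by
  induction n with
  | zero => simp [weight_zero]
  | succ n ih =>
    have := weight_succ n
    have := weight_nonneg n
    have := weight_nonneg (n + 1)
    push_cast
    nlinarith [sq_nonneg ((n : ℝ) + 1), Nat.cast_nonneg (α := ℝ) n]

lemma weight_mul_two_mul_add_one_mul_W (n : ℕ) : weight n * (2 * n + 1) * Wallis.W n = 1 := by
  induction n with
  | zero => simp [weight_zero, Wallis.W]
  | succ n ih =>
    have hw : weight (n + 1) = weight n * ((n : ℝ) + 1 / 2) ^ 2 / ((n : ℝ) + 1) ^ 2 := by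
      rw [← weight_succ, mul_div_cancel_right₀ _ (by positivity)]
    rw [Wallis.W_succ, hw]
    push_cast
    field_simp
    linear_combination (2 * (n : ℝ) + 3) * ih

lemma tendsto_natCast_mul_weight : Tendsto (fun n : ℕ => n * weight n) atTop (𝓝 (1 / π)) := by
  have h := (Wallis.tendsto_W_nhds_pi_div_two.inv₀ (by positivity)).mul
    ((tendsto_natCast_div_add_atTop (1 / 2 : ℝ)).const_mul (1 / 2))
  convert h using 1
  · funext n
    have hW := weight_mul_two_mul_add_one_mul_W n
    have := (Wallis.W_pos n).ne'
    field_simp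
    linear_combination (n : ℝ) * hW
  · field_simp

noncomputable def coeff (q n : ℕ) : ℝ := weight n / poch (n + 1) q

lemma coeff_nonneg (q n : ℕ) : 0 ≤ coeff q n :=
  div_nonneg (weight_nonneg n) (poch_pos (by positivity) q).le

lemma coeff_eq_mul_coeff_succ (q n : ℕ) : coeff q n = (n + 1 + q) * coeff (q + 1) n := by
  have := (poch_pos (by positivity : (0 : ℝ) < n + 1) q).ne'
  rw [coeff, coeff, poch_succ]
  field_simp

lemma succ_mul_coeff_succ (q n : ℕ) :
    (n + 1) * coeff q (n + 1) = ((n : ℝ) + 1 / 2) ^ 2 * coeff (q + 1) n := by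
  have := (poch_pos (by positivity : (0 : ℝ) < n + 1 + 1) q).ne'
  have hw := weight_succ n
  rw [coeff, coeff, poch_succ']
  push_cast
  field_simp
  linear_combination 4 * hw

lemma coeff_le (q n : ℕ) : coeff q n ≤ 1 / ((n : ℝ) + 1) ^ (q + 1) := by
  have hx : (1 : ℝ) ≤ n + 1 := by linarith [Nat.cast_nonneg (α := ℝ) n]
  have hw : weight n * (n + 1) ≤ 1 := by
    nlinarith [weight_mul_two_mul_add_one_le n, weight_nonneg n, Nat.cast_nonneg (α := ℝ) n]
  rw [coeff, div_le_div_iff₀ (poch_pos (by positivity) q) (by positivity), pow_succ']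
  calc weight n * ((n + 1) * (n + 1) ^ q) = weight n * (n + 1) * (n + 1) ^ q := by ring
    _ ≤ 1 * poch (n + 1) q := mul_le_mul hw (pow_le_poch hx q) (by positivity) zero_le_one

lemma pow_mul_coeff_le {k q : ℕ} (h : k ≤ q + 1) (n : ℕ) :
    (n : ℝ) ^ k * coeff q n ≤ 1 / ((n : ℝ) + 1) ^ (q + 1 - k) := by
  calc (n : ℝ) ^ k * coeff q n ≤ ((n : ℝ) + 1) ^ k * (1 / ((n : ℝ) + 1) ^ (q + 1)) :=
        mul_le_mul (pow_le_pow_left₀ (Nat.cast_nonneg n) (by linarith) k) (coeff_le q n)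
          (coeff_nonneg q n) (by positivity)
    _ = 1 / ((n : ℝ) + 1) ^ (q + 1 - k) := by
        rw [← Nat.sub_add_cancel h, pow_add, Nat.add_sub_cancel]
        field_simp

lemma summable_pow_mul_coeff {k q : ℕ} (h : k + 1 ≤ q) :
    Summable fun n : ℕ => (n : ℝ) ^ k * coeff q n := by
  have hsum : Summable fun n : ℕ => 1 / ((n : ℝ) + 1) ^ (q + 1 - k) := by
    have := (summable_nat_add_iff 1).mpr
      (Real.summable_one_div_nat_pow.mpr (by omega : 1 < q + 1 - k))
    exact_mod_cast this
  exact hsum.of_nonneg_of_le (fun n => mul_nonneg (by positivity) (coeff_nonneg q n))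
    (pow_mul_coeff_le (by omega))

lemma tendsto_pow_mul_coeff {k q : ℕ} (h : k ≤ q) :
    Tendsto (fun n : ℕ => (n : ℝ) ^ k * coeff q n) atTop (𝓝 0) := by
  refine squeeze_zero (fun n => mul_nonneg (by positivity) (coeff_nonneg q n)) (fun n => ?_)
    tendsto_one_div_add_atTop_nhds_zero_nat
  refine (pow_mul_coeff_le (by omega) n).trans ?_
  have hx : (1 : ℝ) ≤ n + 1 := by linarith [Nat.cast_nonneg (α := ℝ) n]
  exact one_div_le_one_div_of_le (by positivity) (le_self_pow₀ hx (by omega))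

lemma natCast_mul_coeff_sub_succ (q n : ℕ) :
    (n : ℝ) * coeff q n - ((n + 1 : ℕ) : ℝ) * coeff q (n + 1)
      = (q * n - 1 / 4) * coeff (q + 1) n := by
  push_cast
  linear_combination (n : ℝ) * coeff_eq_mul_coeff_succ q n - succ_mul_coeff_succ q n

lemma sq_mul_coeff_sub_succ (q n : ℕ) :
    (n : ℝ) ^ 2 * coeff q n - ((n + 1 : ℕ) : ℝ) ^ 2 * coeff q (n + 1)
      = ((q - 1) * n ^ 2 - 5 / 4 * n - 1 / 4) * coeff (q + 1) n := by
  push_cast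
  linear_combination (n : ℝ) ^ 2 * coeff_eq_mul_coeff_succ q n - (n + 1) * succ_mul_coeff_succ q n

noncomputable def moment (q k : ℕ) : ℝ := ∑' n : ℕ, (n : ℝ) ^ k * coeff q n

lemma hasSum_moment {q k : ℕ} (h : k + 1 ≤ q) :
    HasSum (fun n : ℕ => (n : ℝ) ^ k * coeff q n) (moment q k) :=
  (summable_pow_mul_coeff h).hasSum

lemma moment_one_zero : moment 1 0 = 4 / π := by
  have hs : HasSum (fun n : ℕ => (n : ℝ) * coeff 0 n - ((n + 1 : ℕ) : ℝ) * coeff 0 (n + 1))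
      (moment 1 0 / -4) :=
    ((hasSum_moment (q := 1) (k := 0) le_rfl).div_const (-4)).congr_fun fun n => by
      rw [natCast_mul_coeff_sub_succ]
      ring
  have hlim : Tendsto (fun n : ℕ => (n : ℝ) * coeff 0 n) atTop (𝓝 (1 / π)) := by
    simpa [coeff, poch_zero] using tendsto_natCast_mul_weight
  have := HasSum.eq_sub_of_tendsto (e := fun n : ℕ => (n : ℝ) * coeff 0 n) hs hlim
  simp only [CharP.cast_eq_zero, zero_mul, zero_sub] at this
  field_simp at this ⊢
  linarith

lemma moment_succ_one {q : ℕ} (hq : 1 ≤ q) : q * moment (q + 1) 1 = moment (q + 1) 0 / 4 := by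
  have hs : HasSum (fun n : ℕ => (n : ℝ) * coeff q n - ((n + 1 : ℕ) : ℝ) * coeff q (n + 1))
      (q * moment (q + 1) 1 - moment (q + 1) 0 / 4) :=
    (((hasSum_moment (q := q + 1) (k := 1) (by omega)).mul_left (q : ℝ)).sub
      ((hasSum_moment (q := q + 1) (k := 0) (by omega)).div_const 4)).congr_fun fun n => by
        rw [natCast_mul_coeff_sub_succ]
        ring
  have hlim : Tendsto (fun n : ℕ => (n : ℝ) * coeff q n) atTop (𝓝 0) := by
    simpa using tendsto_pow_mul_coeff (k := 1) hq
  have := HasSum.eq_sub_of_tendsto (e := fun n : ℕ => (n : ℝ) * coeff q n) hs hlim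
  simp only [CharP.cast_eq_zero, zero_mul, sub_zero] at this
  linarith

lemma moment_succ_two {q : ℕ} (hq : 2 ≤ q) :
    (q - 1) * moment (q + 1) 2 = (5 * moment (q + 1) 1 + moment (q + 1) 0) / 4 := by
  have hs : HasSum
      (fun n : ℕ => (n : ℝ) ^ 2 * coeff q n - ((n + 1 : ℕ) : ℝ) ^ 2 * coeff q (n + 1))
      (((q : ℝ) - 1) * moment (q + 1) 2 - 5 / 4 * moment (q + 1) 1 - moment (q + 1) 0 / 4) :=
    ((((hasSum_moment (q := q + 1) (k := 2) (by omega)).mul_left ((q : ℝ) - 1)).sub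
      ((hasSum_moment (q := q + 1) (k := 1) (by omega)).mul_left (5 / 4))).sub
      ((hasSum_moment (q := q + 1) (k := 0) (by omega)).div_const 4)).congr_fun fun n => by
        rw [sq_mul_coeff_sub_succ]
        ring
  have := HasSum.eq_sub_of_tendsto (e := fun n : ℕ => (n : ℝ) ^ 2 * coeff q n) hs
    (tendsto_pow_mul_coeff hq)
  simp only [CharP.cast_eq_zero, ne_eq, OfNat.ofNat_ne_zero, not_false_eq_true, zero_pow,
    zero_mul, sub_zero] at this
  linarith

lemma moment_succ_zero {q : ℕ} (hq : 1 ≤ q) :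
    moment q 0 = (2 * q + 1) ^ 2 / (4 * q) * moment (q + 1) 0 := by
  have hsplit : moment q 0 = moment (q + 1) 1 + (q + 1) * moment (q + 1) 0 :=
    (hasSum_moment (k := 0) hq).unique <|
      ((hasSum_moment (q := q + 1) (k := 1) (by omega)).add
        ((hasSum_moment (q := q + 1) (k := 0) (by omega)).mul_left ((q : ℝ) + 1))).congr_fun
        fun n => by
          rw [coeff_eq_mul_coeff_succ]
          ring
  have h1 := moment_succ_one hq
  have : (q : ℝ) ≠ 0 := by positivity
  rw [hsplit]
  field_simp
  linear_combination 4 * h1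

lemma moment_zero {q : ℕ} (hq : 1 ≤ q) : moment q 0 = Gamma q / Gamma (q + 1 / 2) ^ 2 := by
  induction q, hq using Nat.le_induction with
  | base =>
    have h : Gamma (1 + 1 / 2) = √π / 2 := by
      rw [add_comm, Gamma_add_one (by norm_num), Gamma_one_half_eq]
      ring
    rw [moment_one_zero, Nat.cast_one, Gamma_one, h, div_pow, sq_sqrt pi_pos.le]
    field_simp
    norm_num
  | succ q hq ih =>
    have hq0 : (q : ℝ) ≠ 0 := by positivity
    have hG : Gamma (q + 1 / 2) ≠ 0 := (Gamma_pos_of_pos (by positivity)).ne'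
    have hG' : Gamma (q + 1 + 1 / 2) = (q + 1 / 2) * Gamma (q + 1 / 2) := by
      rw [add_right_comm, Gamma_add_one (by positivity)]
    rw [moment_succ_zero hq] at ih
    push_cast
    rw [Gamma_add_one hq0, hG']
    field_simp at ih ⊢
    linear_combination ih

end PochhammerSeries

open PochhammerSeries in
theorem stmt13 (p : ℕ) (hp : 3 ≤ p) (f₁ f₂ : ℝ) :
    ∑' n : ℕ, (poch (1/2) n / n.factorial) ^ 2 *
        (((n : ℝ) + f₁) * ((n : ℝ) + f₂) / poch ((n : ℝ) + 1) p) =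
      Real.Gamma p / Real.Gamma (p + 1/2) ^ 2 *
        (f₁ * f₂ + (f₁ + f₂ + 1) / (4 * ((p : ℝ) - 1)) +
          9 / (16 * ((p : ℝ) - 1) * ((p : ℝ) - 2))) := by
  obtain ⟨q, rfl⟩ : ∃ q, p = q + 1 := ⟨p - 1, by omega⟩
  have hsum : HasSum (fun n : ℕ => (poch (1/2) n / n.factorial) ^ 2 *
        (((n : ℝ) + f₁) * ((n : ℝ) + f₂) / poch ((n : ℝ) + 1) (q + 1)))
      (f₁ * f₂ * moment (q + 1) 0 + (f₁ + f₂) * moment (q + 1) 1 + moment (q + 1) 2) :=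
    ((((hasSum_moment (k := 0) (by omega)).mul_left (f₁ * f₂)).add
      ((hasSum_moment (k := 1) (by omega)).mul_left (f₁ + f₂))).add
      (hasSum_moment (k := 2) (by omega))).congr_fun fun n => by
        rw [coeff, weight]
        ring
  have hq : (2 : ℝ) ≤ q := by exact_mod_cast (by omega : 2 ≤ q)
  have : (q : ℝ) ≠ 0 := by positivity
  have : (q : ℝ) - 1 ≠ 0 := by linarith
  have h1 : moment (q + 1) 1 = moment (q + 1) 0 / (4 * q) := by
    field_simp
    linear_combination 4 * moment_succ_one (q := q) (by omega)
  have h2 : moment (q + 1) 2 = (5 * moment (q + 1) 1 + moment (q + 1) 0) / (4 * (q - 1)) := by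
    field_simp
    linear_combination 4 * moment_succ_two (q := q) (by omega)
  rw [hsum.tsum_eq, h2, h1, moment_zero (by omega),
    show ((q + 1 : ℕ) : ℝ) - 1 = q by push_cast; ring,
    show ((q + 1 : ℕ) : ℝ) - 2 = q - 1 by push_cast; ring]
  field_simp
  ring
end
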